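/- Under the same hypotheses as the previous lemma (isometry V : ℂ^d → ℂ^D with d ≥ 2, encoded basis |i⟩ = V ẽ_i, channel ℰ with Kraus family (E_a), recovery channel R with ‖R(ℰ(ρ)) − ρ‖₁ ≤ ε̃ for all density operators ρ supported on the range of V, and P_i the orthogonal projection onto the positive eigenspace of M_i = ℰ(|i⟩⟨i| − ρ_{i,⊥}) with ρ_{i,⊥} = (d−1)^{−1} Σ_{j≠i}|j⟩⟨j|): for every j ≠ i and every Kraus operator E_a, ‖P_i E_a |j⟩‖² ≤ d·ε̃. -/

import Mathlib

open Matrix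
open scoped ComplexOrder

/-- The trace norm `‖A‖₁ = Tr √(AᴴA)` of a complex square matrix. -/
noncomputable def traceNorm {n : Type*} [Fintype n] [DecidableEq n] (A : Matrix n n ℂ) : ℝ :=
  ((((Matrix.posSemidef_conjTranspose_mul_self A).1.eigenvectorUnitary : Matrix n n ℂ) *
      Matrix.diagonal (fun i => ((Real.sqrt ((Matrix.posSemidef_conjTranspose_mul_self A).1.eigenvalues i) : ℝ) : ℂ)) *
      (star (Matrix.posSemidef_conjTranspose_mul_self A).1.eigenvectorUnitary : Matrix n n ℂ))).trace.re

/-- A density operator: positive semidefinite with unit trace. -/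
def IsDensity {n : Type*} [Fintype n] (ρ : Matrix n n ℂ) : Prop :=
  ρ.PosSemidef ∧ ρ.trace = 1

/-- Apply the channel with Kraus family `K`: `ρ ↦ Σ_a K_a ρ K_aᴴ`. -/
noncomputable def applyKraus {ι n n' : Type*} [Fintype ι] [Fintype n] [Fintype n']
    (K : ι → Matrix n' n ℂ) (ρ : Matrix n n ℂ) : Matrix n' n' ℂ :=
  ∑ a, K a * ρ * (K a)ᴴ

/-- The Euclidean norm of a complex vector. -/
noncomputable def evecNorm {n : Type*} [Fintype n] (v : n → ℂ) : ℝ :=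
  Real.sqrt (∑ i, Complex.normSq (v i))

/-- The orthogonal projection onto the direct sum of the eigenspaces of a Hermitian
matrix `M` with positive eigenvalue. -/
noncomputable def posProj {n : Type*} [Fintype n] [DecidableEq n] {M : Matrix n n ℂ}
    (hM : M.IsHermitian) : Matrix n n ℂ :=
  (hM.eigenvectorUnitary : Matrix n n ℂ) *
    Matrix.diagonal (fun i => if 0 < hM.eigenvalues i then (1 : ℂ) else 0) *
    (hM.eigenvectorUnitary : Matrix n n ℂ)ᴴ

/-- The encoded basis vector `|i⟩ = V ẽ_i`. -/
noncomputable def ket {d D : ℕ} (V : Matrix (Fin D) (Fin d) ℂ) (i : Fin d) : Fin D → ℂ :=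
  V *ᵥ Pi.single i 1

/-- The rank-one projector `|i⟩⟨i|` onto the encoded basis vector. -/
noncomputable def ketbra {d D : ℕ} (V : Matrix (Fin D) (Fin d) ℂ) (i : Fin d) :
    Matrix (Fin D) (Fin D) ℂ :=
  Matrix.vecMulVec (ket V i) (star (ket V i))

/-- The state `ρ_{i,⊥} = (d−1)⁻¹ Σ_{j ≠ i} |j⟩⟨j|`. -/
noncomputable def rhoPerp {d D : ℕ} (V : Matrix (Fin D) (Fin d) ℂ) (i : Fin d) :
    Matrix (Fin D) (Fin D) ℂ :=
  ((d : ℂ) - 1)⁻¹ • ∑ j ∈ Finset.univ.erase i, ketbra V j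

/-!
Let `ρ_i = |i⟩⟨i|` and `T = ρ_i − Σ_{j≠i} |j⟩⟨j|`, so that `−1 ≤ T ≤ 1` and
`Tr (T (ρ_i − ρ_{i,⊥})) = 2`.
Since `R ∘ ℰ` moves each of `ρ_i`, `ρ_{i,⊥}` by at most `ε̃` in trace norm,
`Tr (T R(M_i)) ≥ 2 − 2ε̃`. By duality `Tr (T R(M_i)) = Tr (R†(T) M_i) ≤ ‖M_i‖₁`, and
`‖M_i‖₁ = 2 Tr (P_i M_i)` because `M_i` is traceless; hence `Tr (P_i M_i) ≥ 1 − ε̃`.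
As `Tr (P_i ℰ(ρ_i)) ≤ 1`, this leaves
`Tr (P_i ℰ(ρ_{i,⊥})) = (d − 1)⁻¹ Σ_{j≠i} Σ_a ‖P_i E_a |j⟩‖² ≤ ε̃`.
-/

section Projection

variable {n : Type*} [Fintype n]

lemma evecNorm_sq (v : n → ℂ) : evecNorm v ^ 2 = (star v ⬝ᵥ v).re := by
  rw [evecNorm, Real.sq_sqrt (Finset.sum_nonneg fun _ _ => Complex.normSq_nonneg _),
    dotProduct, Complex.re_sum]
  refine Finset.sum_congr rfl fun k _ => ?_
  rw [Pi.star_apply, Complex.star_def, ← Complex.normSq_eq_conj_mul_self, Complex.ofReal_re]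

namespace IsStarProjection

variable {P : Matrix n n ℂ} (hP : IsStarProjection P)
include hP

lemma conjTranspose_mul_self : Pᴴ * P = P := by
  rw [← star_eq_conjTranspose, hP.isSelfAdjoint.star_eq, hP.isIdempotentElem.eq]

lemma posSemidef : P.PosSemidef :=
  hP.conjTranspose_mul_self ▸ posSemidef_conjTranspose_mul_self P

lemma evecNorm_mulVec_sq (w : n → ℂ) :
    evecNorm (P *ᵥ w) ^ 2 = (star w ⬝ᵥ (P *ᵥ w)).re := by
  rw [evecNorm_sq, star_mulVec, ← dotProduct_mulVec, mulVec_mulVec,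
    hP.conjTranspose_mul_self]

lemma trace_mul_nonneg {σ : Matrix n n ℂ} (hσ : σ.PosSemidef) : 0 ≤ (P * σ).trace := by
  have h : (P * σ).trace = (Pᴴ * σ * P).trace := by
    rw [trace_mul_cycle, ← star_eq_conjTranspose, hP.isSelfAdjoint.star_eq,
      hP.isIdempotentElem.eq]
  exact h ▸ (hσ.conjTranspose_mul_mul_same P).trace_nonneg

lemma re_trace_mul_le [DecidableEq n] {σ : Matrix n n ℂ} (hσ : σ.PosSemidef) :
    (P * σ).trace.re ≤ σ.trace.re := by
  have h := (Complex.nonneg_iff.mp (hP.one_sub.trace_mul_nonneg hσ)).1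
  rw [Matrix.sub_mul, one_mul, trace_sub, Complex.sub_re] at h
  linarith

lemma re_trace_mul_vecMulVec (v : n → ℂ) :
    (P * vecMulVec v (star v)).trace.re = evecNorm (P *ᵥ v) ^ 2 := by
  rw [mul_vecMulVec, trace_vecMulVec, dotProduct_comm, hP.evecNorm_mulVec_sq]

end IsStarProjection

end Projection

section Spectral

open scoped MatrixOrder

variable {n : Type*} [Fintype n] [DecidableEq n]

lemma traceNorm_eq_re_trace_abs (A : Matrix n n ℂ) : traceNorm A = (CFC.abs A).trace.re := by
  have hA : (star A * A).PosSemidef := posSemidef_conjTranspose_mul_self A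
  rw [traceNorm, CFC.abs, CFC.sqrt_eq_real_sqrt _ hA.nonneg, cfcₙ_eq_cfc, hA.1.cfc_eq]
  rfl

lemma traceNorm_nonneg (A : Matrix n n ℂ) : 0 ≤ traceNorm A := by
  rw [traceNorm_eq_re_trace_abs]
  exact (Complex.nonneg_iff.mp (nonneg_iff_posSemidef.mp (CFC.abs_nonneg A)).trace_nonneg).1

lemma abs_re_conjTranspose_mul_mul_apply_le_one {S U : Matrix n n ℂ} (h₁ : (1 - S).PosSemidef)
    (h₂ : (1 + S).PosSemidef) (hU : Uᴴ * U = 1) (k : n) : |((Uᴴ * S * U) k k).re| ≤ 1 := by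
  have hle := (Complex.nonneg_iff.mp ((h₁.conjTranspose_mul_mul_same U).diag_nonneg (i := k))).1
  have hge := (Complex.nonneg_iff.mp ((h₂.conjTranspose_mul_mul_same U).diag_nonneg (i := k))).1
  simp only [Matrix.mul_sub, Matrix.sub_mul, Matrix.mul_add, Matrix.add_mul, Matrix.mul_one, hU,
    Matrix.sub_apply, Matrix.add_apply, one_apply_eq, Complex.sub_re, Complex.add_re,
    Complex.one_re] at hle hge
  exact abs_le.mpr ⟨by linarith, by linarith⟩

namespace Matrix.IsHermitian

variable {X : Matrix n n ℂ} (hX : X.IsHermitian)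
include hX

lemma traceNorm_eq_sum_abs_eigenvalues : traceNorm X = ∑ k, |hX.eigenvalues k| := by
  rw [traceNorm_eq_re_trace_abs, CFC.abs_eq_cfc_norm X hX.isSelfAdjoint, hX.cfc_eq,
    IsHermitian.cfc, Unitary.conjStarAlgAut_apply, trace_mul_cycle, Unitary.coe_star_mul_self,
    one_mul, trace_diagonal, Complex.re_sum]
  simp

lemma posProj_eq_cfc : posProj hX = cfc (fun x : ℝ => if 0 < x then (1 : ℝ) else 0) X := by
  rw [hX.cfc_eq, IsHermitian.cfc, Unitary.conjStarAlgAut_apply, posProj]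
  congr 3
  funext k
  simp only [Function.comp_apply]
  split_ifs <;> simp

lemma isStarProjection_posProj : IsStarProjection (posProj hX) := by
  rw [hX.posProj_eq_cfc]
  refine ⟨?_, IsSelfAdjoint.cfc⟩
  rw [IsIdempotentElem, ← cfc_mul _ _ X (finite_real_spectrum.continuousOn _)
    (finite_real_spectrum.continuousOn _)]
  congr 1
  funext x
  split_ifs <;> simp

lemma posProj_mul_self : posProj hX * X = X⁺ := by
  rw [hX.posProj_eq_cfc, CFC.posPart_def, cfcₙ_eq_cfc]
  nth_rw 2 [← cfc_id' ℝ X]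
  rw [← cfc_mul _ _ X (finite_real_spectrum.continuousOn _)]
  congr 1
  funext x
  split_ifs with h
  · simp [h.le]
  · simp [not_lt.mp h]

lemma traceNorm_eq_two_mul_re_trace_posProj_mul (htr : X.trace = 0) :
    traceNorm X = 2 * (posProj hX * X).trace.re := by
  have h := congrArg (fun A => (trace A).re) (CFC.abs_add_self X)
  simp only [trace_add, htr, add_zero, two_smul, Complex.add_re] at h
  rw [traceNorm_eq_re_trace_abs, hX.posProj_mul_self, h, two_mul]

lemma trace_mul_eq_sum_eigenvalues_mul (S : Matrix n n ℂ) :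
    (S * X).trace = ∑ k, (hX.eigenvalues k : ℂ) *
      (star (hX.eigenvectorUnitary : Matrix n n ℂ) * S * hX.eigenvectorUnitary) k k := by
  conv_lhs => rw [hX.spectral_theorem, Unitary.conjStarAlgAut_apply]
  rw [← Matrix.mul_assoc, ← Matrix.mul_assoc, trace_mul_cycle, ← Matrix.mul_assoc]
  simp only [trace, diag_apply, mul_diagonal, Function.comp_apply]
  exact Finset.sum_congr rfl fun k _ => mul_comm _ _

lemma abs_re_trace_mul_le_traceNorm {S : Matrix n n ℂ} (h₁ : (1 - S).PosSemidef)
    (h₂ : (1 + S).PosSemidef) : |(S * X).trace.re| ≤ traceNorm X := by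
  rw [hX.trace_mul_eq_sum_eigenvalues_mul, Complex.re_sum, hX.traceNorm_eq_sum_abs_eigenvalues]
  refine (Finset.abs_sum_le_sum_abs _ _).trans (Finset.sum_le_sum fun k _ => ?_)
  rw [Complex.re_ofReal_mul, abs_mul]
  exact mul_le_of_le_one_right (abs_nonneg _) <| abs_re_conjTranspose_mul_mul_apply_le_one h₁ h₂
    (Unitary.coe_star_mul_self _) k

end Matrix.IsHermitian

end Spectral

section Kraus

variable {ι n n' : Type*} [Fintype ι] [Fintype n] [Fintype n'] (K : ι → Matrix n' n ℂ)

lemma applyKraus_add (A B : Matrix n n ℂ) :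
    applyKraus K (A + B) = applyKraus K A + applyKraus K B := by
  simp only [applyKraus, Matrix.mul_add, Matrix.add_mul, Finset.sum_add_distrib]

lemma applyKraus_sub (A B : Matrix n n ℂ) :
    applyKraus K (A - B) = applyKraus K A - applyKraus K B := by
  simp only [applyKraus, Matrix.mul_sub, Matrix.sub_mul, Finset.sum_sub_distrib]

lemma applyKraus_smul (c : ℂ) (A : Matrix n n ℂ) :
    applyKraus K (c • A) = c • applyKraus K A := by
  simp only [applyKraus, Matrix.mul_smul, Matrix.smul_mul, Finset.smul_sum]

lemma applyKraus_sum {κ : Type*} (s : Finset κ) (A : κ → Matrix n n ℂ) :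
    applyKraus K (∑ j ∈ s, A j) = ∑ j ∈ s, applyKraus K (A j) := by
  simp only [applyKraus, Matrix.mul_sum, Matrix.sum_mul]
  rw [Finset.sum_comm]

lemma Matrix.PosSemidef.applyKraus {ρ : Matrix n n ℂ} (hρ : ρ.PosSemidef) :
    (applyKraus K ρ).PosSemidef :=
  posSemidef_sum _ fun a _ => hρ.mul_mul_conjTranspose_same (K a)

lemma Matrix.IsHermitian.applyKraus {ρ : Matrix n n ℂ} (hρ : ρ.IsHermitian) :
    (applyKraus K ρ).IsHermitian :=
  isSelfAdjoint_sum _ fun a _ => isHermitian_mul_mul_conjTranspose (K a) hρ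

lemma trace_applyKraus [DecidableEq n] (hK : ∑ a, (K a)ᴴ * K a = 1) (ρ : Matrix n n ℂ) :
    (applyKraus K ρ).trace = ρ.trace := by
  calc (applyKraus K ρ).trace = ∑ a, ((K a)ᴴ * K a * ρ).trace := by
        simp only [applyKraus, trace_sum, trace_mul_cycle (K _)]
    _ = ρ.trace := by rw [← trace_sum, ← Finset.sum_mul, hK, one_mul]

lemma trace_mul_applyKraus (Q : Matrix n' n' ℂ) (ρ : Matrix n n ℂ) :
    (Q * applyKraus K ρ).trace = (applyKraus (fun a => (K a)ᴴ) Q * ρ).trace := by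
  simp only [applyKraus, conjTranspose_conjTranspose, Finset.mul_sum, Finset.sum_mul, trace_sum]
  refine Finset.sum_congr rfl fun a _ => ?_
  rw [← Matrix.mul_assoc, trace_mul_cycle, ← Matrix.mul_assoc]

lemma applyKraus_conjTranspose_one [DecidableEq n] [DecidableEq n']
    (hK : ∑ a, (K a)ᴴ * K a = 1) :
    applyKraus (fun a => (K a)ᴴ) (1 : Matrix n' n' ℂ) = 1 := by
  simpa only [applyKraus, Matrix.mul_one, conjTranspose_conjTranspose] using hK

lemma re_trace_mul_applyKraus_vecMulVec {P : Matrix n' n' ℂ} (hP : IsStarProjection P)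
    (v : n → ℂ) :
    (P * applyKraus K (vecMulVec v (star v))).trace.re =
      ∑ a, evecNorm (P *ᵥ (K a *ᵥ v)) ^ 2 := by
  simp only [applyKraus, Finset.mul_sum, trace_sum, Complex.re_sum, mul_vecMulVec,
    vecMulVec_mul, ← star_mulVec, ← hP.re_trace_mul_vecMulVec]

lemma abs_re_trace_mul_applyKraus_le_traceNorm [DecidableEq n] [DecidableEq n']
    (hK : ∑ a, (K a)ᴴ * K a = 1) {X : Matrix n n ℂ} (hX : X.IsHermitian)
    {S : Matrix n' n' ℂ} (h₁ : (1 - S).PosSemidef) (h₂ : (1 + S).PosSemidef) :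
    |(S * applyKraus K X).trace.re| ≤ traceNorm X := by
  rw [trace_mul_applyKraus]
  refine hX.abs_re_trace_mul_le_traceNorm ?_ ?_
  · rw [← applyKraus_conjTranspose_one K hK, ← applyKraus_sub]
    exact h₁.applyKraus _
  · rw [← applyKraus_conjTranspose_one K hK, ← applyKraus_add]
    exact h₂.applyKraus _

end Kraus

section EncodedBasis

variable {d D : ℕ} {V : Matrix (Fin D) (Fin d) ℂ}

noncomputable def perpProj (V : Matrix (Fin D) (Fin d) ℂ) (i : Fin d) :
    Matrix (Fin D) (Fin D) ℂ :=
  ∑ j ∈ Finset.univ.erase i, ketbra V j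

lemma rhoPerp_eq_smul_perpProj (i : Fin d) : rhoPerp V i = ((d : ℂ) - 1)⁻¹ • perpProj V i :=
  rfl

variable (hV : Vᴴ * V = 1)
include hV

lemma star_ket_dotProduct_ket (j k : Fin d) :
    star (ket V j) ⬝ᵥ ket V k = if j = k then 1 else 0 := by
  rw [ket, ket, star_mulVec, ← dotProduct_mulVec, mulVec_mulVec, hV,
    one_mulVec, Pi.star_single, star_one, single_dotProduct, one_mul, Pi.single_apply]

lemma ketbra_mul_ketbra (j k : Fin d) :
    ketbra V j * ketbra V k = if j = k then ketbra V j else 0 := by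
  rw [ketbra, ketbra, vecMulVec_mul_vecMulVec, star_ket_dotProduct_ket hV]
  split_ifs with h
  · rw [h, one_smul]
  · rw [zero_smul, vecMulVec_zero]

lemma trace_ketbra (j : Fin d) : (ketbra V j).trace = 1 := by
  rw [ketbra, trace_vecMulVec, dotProduct_comm, star_ket_dotProduct_ket hV, if_pos rfl]

lemma isStarProjection_ketbra (j : Fin d) : IsStarProjection (ketbra V j) :=
  ⟨by rw [IsIdempotentElem, ketbra_mul_ketbra hV, if_pos rfl],
    (posSemidef_vecMulVec_self_star _).1⟩

lemma isDensity_ketbra (j : Fin d) : IsDensity (ketbra V j) :=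
  ⟨(isStarProjection_ketbra hV j).posSemidef, trace_ketbra hV j⟩

lemma mul_ketbra_mul_eq_ketbra (j : Fin d) :
    (V * Vᴴ) * ketbra V j * (V * Vᴴ) = ketbra V j := by
  have hket : (V * Vᴴ) *ᵥ ket V j = ket V j := by
    rw [ket, mulVec_mulVec, Matrix.mul_assoc, hV, Matrix.mul_one]
  have hket' : star (ket V j) ᵥ* (V * Vᴴ) = star (ket V j) := by
    have hself : (V * Vᴴ)ᴴ = V * Vᴴ := by rw [conjTranspose_mul, conjTranspose_conjTranspose]
    rw [← hself, ← star_mulVec, hket]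
  rw [ketbra, mul_vecMulVec, vecMulVec_mul, hket, hket']

lemma ketbra_mul_perpProj_self (i : Fin d) : ketbra V i * perpProj V i = 0 := by
  rw [perpProj, Matrix.mul_sum]
  exact Finset.sum_eq_zero fun j hj => by
    rw [ketbra_mul_ketbra hV, if_neg (Finset.ne_of_mem_erase hj).symm]

lemma perpProj_mul_ketbra_self (i : Fin d) : perpProj V i * ketbra V i = 0 := by
  rw [perpProj, Matrix.sum_mul]
  exact Finset.sum_eq_zero fun j hj => by
    rw [ketbra_mul_ketbra hV, if_neg (Finset.ne_of_mem_erase hj)]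

lemma isStarProjection_perpProj (i : Fin d) : IsStarProjection (perpProj V i) := by
  refine ⟨?_, isSelfAdjoint_sum _ fun j _ => (isStarProjection_ketbra hV j).isSelfAdjoint⟩
  rw [IsIdempotentElem, perpProj, Finset.sum_mul_sum]
  refine Finset.sum_congr rfl fun j hj => ?_
  simp_rw [ketbra_mul_ketbra hV]
  rw [Finset.sum_ite_eq, if_pos hj]

lemma trace_perpProj (i : Fin d) : (perpProj V i).trace = (d : ℂ) - 1 := by
  rw [perpProj, trace_sum, Finset.sum_congr rfl fun j _ => trace_ketbra hV j, Finset.sum_const,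
    Finset.card_erase_of_mem (Finset.mem_univ i), Finset.card_univ, Fintype.card_fin,
    nsmul_one, Nat.cast_sub i.pos, Nat.cast_one]

lemma isDensity_rhoPerp (hd : 2 ≤ d) (i : Fin d) : IsDensity (rhoPerp V i) := by
  have hd' : (d : ℂ) - 1 ≠ 0 := sub_ne_zero.mpr (by exact_mod_cast (by omega : d ≠ 1))
  refine ⟨(isStarProjection_perpProj hV i).posSemidef.smul ?_, ?_⟩
  · exact inv_nonneg.mpr (sub_nonneg.mpr (by exact_mod_cast (by omega : 1 ≤ d)))
  · rw [rhoPerp_eq_smul_perpProj, trace_smul, trace_perpProj hV, smul_eq_mul,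
      inv_mul_cancel₀ hd']

lemma mul_rhoPerp_mul_eq_rhoPerp (i : Fin d) :
    (V * Vᴴ) * rhoPerp V i * (V * Vᴴ) = rhoPerp V i := by
  simp only [rhoPerp, Matrix.mul_smul, Matrix.smul_mul, Matrix.mul_sum, Matrix.sum_mul,
    mul_ketbra_mul_eq_ketbra hV]

noncomputable def distinguisher (V : Matrix (Fin D) (Fin d) ℂ) (i : Fin d) :
    Matrix (Fin D) (Fin D) ℂ :=
  ketbra V i - perpProj V i

lemma one_sub_distinguisher_posSemidef (i : Fin d) : (1 - distinguisher V i).PosSemidef := by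
  rw [distinguisher, sub_sub_eq_add_sub, add_sub_right_comm]
  exact (isStarProjection_ketbra hV i).one_sub.posSemidef.add
    (isStarProjection_perpProj hV i).posSemidef

lemma one_add_distinguisher_posSemidef (i : Fin d) : (1 + distinguisher V i).PosSemidef := by
  rw [distinguisher, add_sub, add_sub_right_comm]
  exact (isStarProjection_perpProj hV i).one_sub.posSemidef.add
    (isStarProjection_ketbra hV i).posSemidef

lemma trace_distinguisher_mul_ketbra_sub_rhoPerp (hd : 2 ≤ d) (i : Fin d) :
    (distinguisher V i * (ketbra V i - rhoPerp V i)).trace = 2 := by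
  have hTk : distinguisher V i * ketbra V i = ketbra V i := by
    rw [distinguisher, Matrix.sub_mul, (isStarProjection_ketbra hV i).isIdempotentElem.eq,
      perpProj_mul_ketbra_self hV, sub_zero]
  have hTρ : distinguisher V i * rhoPerp V i = -rhoPerp V i := by
    rw [distinguisher, rhoPerp_eq_smul_perpProj, Matrix.mul_smul, Matrix.sub_mul,
      ketbra_mul_perpProj_self hV, (isStarProjection_perpProj hV i).isIdempotentElem.eq, zero_sub,
      smul_neg]
  rw [Matrix.mul_sub, hTk, hTρ, sub_neg_eq_add, trace_add, trace_ketbra hV,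
    (isDensity_rhoPerp hV hd i).2, one_add_one_eq_two]

end EncodedBasis

section GhostProjector

variable {d D : ℕ} {V : Matrix (Fin D) (Fin d) ℂ} {ι κ : Type*} [Fintype ι] [Fintype κ]

lemma two_sub_two_mul_le_re_trace_distinguisher_mul (hd : 2 ≤ d) (hV : Vᴴ * V = 1)
    (E : ι → Matrix (Fin D) (Fin D) ℂ) (R : κ → Matrix (Fin D) (Fin D) ℂ) {εt : ℝ}
    (i : Fin d)
    (hi : traceNorm (applyKraus R (applyKraus E (ketbra V i)) - ketbra V i) ≤ εt)
    (hperp : traceNorm (applyKraus R (applyKraus E (rhoPerp V i)) - rhoPerp V i) ≤ εt) :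
    2 - 2 * εt ≤
      (distinguisher V i * applyKraus R (applyKraus E (ketbra V i - rhoPerp V i))).trace.re := by
  have herr : ∀ ρ : Matrix (Fin D) (Fin D) ℂ, ρ.IsHermitian →
      |(distinguisher V i * (applyKraus R (applyKraus E ρ) - ρ)).trace.re| ≤
        traceNorm (applyKraus R (applyKraus E ρ) - ρ) := fun ρ hρ =>
    ((hρ.applyKraus E).applyKraus R).sub hρ |>.abs_re_trace_mul_le_traceNorm
      (one_sub_distinguisher_posSemidef hV i) (one_add_distinguisher_posSemidef hV i)
  have herr_i := (abs_le.mp ((herr _ (isDensity_ketbra hV i).1.1).trans hi)).1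
  have herr_perp := (abs_le.mp ((herr _ (isDensity_rhoPerp hV hd i).1.1).trans hperp)).2
  have hsplit : applyKraus R (applyKraus E (ketbra V i - rhoPerp V i)) =
      (applyKraus R (applyKraus E (ketbra V i)) - ketbra V i) -
        (applyKraus R (applyKraus E (rhoPerp V i)) - rhoPerp V i) +
          (ketbra V i - rhoPerp V i) := by
    rw [applyKraus_sub, applyKraus_sub]
    abel
  rw [hsplit, Matrix.mul_add, Matrix.mul_sub, trace_add, trace_sub,
    trace_distinguisher_mul_ketbra_sub_rhoPerp hV hd, Complex.add_re, Complex.sub_re,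
    Complex.re_ofNat]
  linarith

lemma re_trace_mul_applyKraus_rhoPerp {P : Matrix (Fin D) (Fin D) ℂ} (hP : IsStarProjection P)
    (E : ι → Matrix (Fin D) (Fin D) ℂ) (i : Fin d) :
    (P * applyKraus E (rhoPerp V i)).trace.re =
      ((d : ℝ) - 1)⁻¹ *
        ∑ j ∈ Finset.univ.erase i, ∑ a, evecNorm (P *ᵥ (E a *ᵥ ket V j)) ^ 2 := by
  have hc : ((d : ℂ) - 1)⁻¹ = (((d : ℝ) - 1)⁻¹ : ℝ) := by push_cast; rfl
  rw [rhoPerp, applyKraus_smul, applyKraus_sum, Matrix.mul_smul, trace_smul, smul_eq_mul, hc,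
    Complex.re_ofReal_mul, Matrix.mul_sum, trace_sum, Complex.re_sum]
  simp only [ketbra, re_trace_mul_applyKraus_vecMulVec _ hP]

lemma one_sub_le_re_trace_posProj_mul (hd : 2 ≤ d) (hV : Vᴴ * V = 1)
    {E : ι → Matrix (Fin D) (Fin D) ℂ} (hE : ∑ a, (E a)ᴴ * E a = 1)
    {R : κ → Matrix (Fin D) (Fin D) ℂ} (hR : ∑ k, (R k)ᴴ * R k = 1) {εt : ℝ} {i : Fin d}
    (hM : (applyKraus E (ketbra V i - rhoPerp V i)).IsHermitian)
    (hi : traceNorm (applyKraus R (applyKraus E (ketbra V i)) - ketbra V i) ≤ εt)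
    (hperp : traceNorm (applyKraus R (applyKraus E (rhoPerp V i)) - rhoPerp V i) ≤ εt) :
    1 - εt ≤ (posProj hM * applyKraus E (ketbra V i - rhoPerp V i)).trace.re := by
  have htr : (applyKraus E (ketbra V i - rhoPerp V i)).trace = 0 := by
    rw [trace_applyKraus E hE, trace_sub, (isDensity_ketbra hV i).2,
      (isDensity_rhoPerp hV hd i).2, sub_self]
  have hlow := two_sub_two_mul_le_re_trace_distinguisher_mul hd hV E R i hi hperp
  have hup := (abs_le.mp (abs_re_trace_mul_applyKraus_le_traceNorm R hR hM
    (one_sub_distinguisher_posSemidef hV i) (one_add_distinguisher_posSemidef hV i))).2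
  rw [hM.traceNorm_eq_two_mul_re_trace_posProj_mul htr] at hup
  linarith

lemma sum_evecNorm_sq_le_of_one_sub_le_re_trace (hd : 2 ≤ d) (hV : Vᴴ * V = 1)
    {E : ι → Matrix (Fin D) (Fin D) ℂ} (hE : ∑ a, (E a)ᴴ * E a = 1)
    {P : Matrix (Fin D) (Fin D) ℂ} (hP : IsStarProjection P) {εt : ℝ} {i : Fin d}
    (hcaptured : 1 - εt ≤ (P * applyKraus E (ketbra V i - rhoPerp V i)).trace.re) :
    ∑ j ∈ Finset.univ.erase i, ∑ a, evecNorm (P *ᵥ (E a *ᵥ ket V j)) ^ 2 ≤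
      ((d : ℝ) - 1) * εt := by
  have hi := hP.re_trace_mul_le ((isDensity_ketbra hV i).1.applyKraus E)
  rw [trace_applyKraus E hE, (isDensity_ketbra hV i).2, Complex.one_re] at hi
  rw [applyKraus_sub, Matrix.mul_sub, trace_sub, Complex.sub_re,
    re_trace_mul_applyKraus_rhoPerp hP] at hcaptured
  have hd' : (2 : ℝ) ≤ d := by exact_mod_cast hd
  rw [← inv_mul_le_iff₀ (by linarith)]
  linarith

end GhostProjector

/-- **Ghost projector lemma, part 2.** Under the same hypotheses: the ghost projector
`P_i` nearly annihilates the corrupted images of the other encoded basis vectors: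
`‖P_i E_a |j⟩‖² ≤ d·ε̃` for every `j ≠ i`. -/
theorem ghost_projector_nearly_annihilates
    (d D r r' : ℕ) (hd : 2 ≤ d)
    (V : Matrix (Fin D) (Fin d) ℂ) (hV : Vᴴ * V = 1)
    (E : Fin r → Matrix (Fin D) (Fin D) ℂ) (hE : ∑ a, (E a)ᴴ * E a = 1)
    (R : Fin r' → Matrix (Fin D) (Fin D) ℂ) (hR : ∑ k, (R k)ᴴ * R k = 1)
    (εt : ℝ)
    (hrec : ∀ ρ : Matrix (Fin D) (Fin D) ℂ, IsDensity ρ →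
      (V * Vᴴ) * ρ * (V * Vᴴ) = ρ →
      traceNorm (applyKraus R (applyKraus E ρ) - ρ) ≤ εt)
    (i : Fin d)
    (hM : (applyKraus E (ketbra V i - rhoPerp V i)).IsHermitian) :
    ∀ j : Fin d, j ≠ i → ∀ a : Fin r,
      (evecNorm (posProj hM *ᵥ (E a *ᵥ ket V j))) ^ 2 ≤ (d : ℝ) * εt := by
  intro j hj a
  have hrec_i := hrec _ (isDensity_ketbra hV i) (mul_ketbra_mul_eq_ketbra hV i)
  have hrec_perp := hrec _ (isDensity_rhoPerp hV hd i) (mul_rhoPerp_mul_eq_rhoPerp hV i)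
  have hleak := sum_evecNorm_sq_le_of_one_sub_le_re_trace hd hV hE hM.isStarProjection_posProj
    (one_sub_le_re_trace_posProj_mul hd hV hE hR hM hrec_i hrec_perp)
  have hεt : 0 ≤ εt := (traceNorm_nonneg _).trans hrec_i
  calc evecNorm (posProj hM *ᵥ (E a *ᵥ ket V j)) ^ 2
      ≤ ∑ j ∈ Finset.univ.erase i, ∑ a, evecNorm (posProj hM *ᵥ (E a *ᵥ ket V j)) ^ 2 :=
        (Finset.single_le_sum (f := fun a => evecNorm (posProj hM *ᵥ (E a *ᵥ ket V j)) ^ 2)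
          (fun _ _ => sq_nonneg _) (Finset.mem_univ a)).trans
        (Finset.single_le_sum
          (f := fun j => ∑ a, evecNorm (posProj hM *ᵥ (E a *ᵥ ket V j)) ^ 2)
          (fun _ _ => Finset.sum_nonneg fun _ _ => sq_nonneg _)
          (Finset.mem_erase.mpr ⟨hj, Finset.mem_univ j⟩))
    _ ≤ ((d : ℝ) - 1) * εt := hleak
    _ ≤ d * εt := by linarith
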